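/- Let Ω ⊆ ℝⁿ be open and nonempty, h : Ω → ℝ continuous, and ρ : ℝⁿ → [0, ∞) an integrable probability density whose support is Ω (ρ > 0 a.e. on Ω, ρ = 0 a.e. off Ω). Define ψ(k) := log ∫_Ω ρ(y) exp(⟨k, y⟩ − h(y)) dy ∈ (−∞, +∞] and φ_h(x) := sup_{k ∈ ℝⁿ} (⟨x, k⟩ − ψ(k)). Then exactly one of the following holds on the convex hull ⟨Ω⟩: either φ_h(x) = −∞ for every x ∈ ⟨Ω⟩, or φ_h is real-valued and continuous on ⟨Ω⟩. -/

import Mathlib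

open MeasureTheory
open scoped RealInnerProductSpace ENNReal

/-- The tilted log-moment-generating function
`ψ(k) = log ∫_Ω ρ(y) exp(⟨k,y⟩ − h(y)) dy ∈ [−∞, +∞]` (it takes values in `(−∞,∞]`
when `ρ` is a.e. positive on the nonempty open set `Ω`). -/
noncomputable def psiTilt {n : ℕ} (Ω : Set (EuclideanSpace ℝ (Fin n)))
    (ρ h : EuclideanSpace ℝ (Fin n) → ℝ) (k : EuclideanSpace ℝ (Fin n)) : EReal :=
  ENNReal.log (∫⁻ y in Ω, ENNReal.ofReal (ρ y * Real.exp (⟪k, y⟫ - h y)))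

/-- The Legendre transform `φ_h(x) = sup_k (⟨x,k⟩ − ψ(k))`, with values in `ℝ ∪ {−∞}`. -/
noncomputable def phiTilt {n : ℕ} (Ω : Set (EuclideanSpace ℝ (Fin n)))
    (ρ h : EuclideanSpace ℝ (Fin n) → ℝ) (x : EuclideanSpace ℝ (Fin n)) : EReal :=
  ⨆ k : EuclideanSpace ℝ (Fin n), ((⟪x, k⟫ : ℝ) : EReal) - psiTilt Ω ρ h k

/-!
Fix `x ∈ Ω` and a small ball around it on which `h ≤ M`. The `2ⁿ` open orthants at `x` cut the
ball into pieces of positive `ρ`-mass, at least `m > 0` each, and for every `k` one of them lies in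
the half-space `⟪k, y - x⟫ ≥ 0`; integrating over that piece gives `ψ(k) ≥ ⟪x, k⟫ - M + log m`.
Such affine minorants of `ψ` pass to convex combinations, so `φ_h` is bounded above on `⟨Ω⟩`.
If `ψ ≡ +∞` then `φ_h ≡ -∞`. Otherwise `φ_h > -∞` everywhere, so on the open convex set `⟨Ω⟩` it
is a real-valued convex function, hence continuous.
-/

section LegendreTransform

variable {E : Type*} [NormedAddCommGroup E] [InnerProductSpace ℝ E] {ψ : E → EReal}

noncomputable def legendreTransform (ψ : E → EReal) (x : E) : EReal :=
  ⨆ k, ((⟪x, k⟫ : ℝ) : EReal) - ψ k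

lemma legendreTransform_le_coe_iff {x : E} {c : ℝ} :
    legendreTransform ψ x ≤ c ↔ ∀ k, ((⟪x, k⟫ - c : ℝ) : EReal) ≤ ψ k := by
  refine iSup_le_iff.trans (forall_congr' fun k => ?_)
  rw [EReal.sub_le_iff_le_add (.inr (EReal.coe_ne_top c)) (.inr (EReal.coe_ne_bot c)),
    EReal.coe_sub, EReal.sub_le_iff_le_add (.inl (EReal.coe_ne_bot c)) (.inl (EReal.coe_ne_top c)),
    add_comm]

lemma legendreTransform_eq_bot (hψ : ∀ k, ψ k = ⊤) (x : E) : legendreTransform ψ x = ⊥ := by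
  simp [legendreTransform, hψ]

lemma legendreTransform_ne_bot {k₀ : E} (hk₀ : ψ k₀ ≠ ⊤) (x : E) :
    legendreTransform ψ x ≠ ⊥ := by
  refine ne_bot_of_le_ne_bot ?_ (le_iSup (fun k => ((⟪x, k⟫ : ℝ) : EReal) - ψ k) k₀)
  generalize ψ k₀ = t at hk₀ ⊢
  induction t using EReal.rec with
  | bot => simp
  | coe t => exact EReal.coe_ne_bot (⟪x, k₀⟫ - t)
  | top => exact absurd rfl hk₀

lemma legendreTransform_combo_le {x y : E} {a b cx cy : ℝ} (ha : 0 ≤ a) (hb : 0 ≤ b)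
    (hab : a + b = 1) (hx : legendreTransform ψ x ≤ cx) (hy : legendreTransform ψ y ≤ cy) :
    legendreTransform ψ (a • x + b • y) ≤ ((a * cx + b * cy : ℝ) : EReal) := by
  rw [legendreTransform_le_coe_iff] at hx hy ⊢
  intro k
  have hcomb : ⟪a • x + b • y, k⟫ - (a * cx + b * cy) =
      a * (⟪x, k⟫ - cx) + b * (⟪y, k⟫ - cy) := by
    rw [inner_add_left, real_inner_smul_left, real_inner_smul_left]; ring
  rw [hcomb]
  refine (EReal.coe_le_coe_iff.2 (Convex.combo_le_max _ _ ha hb hab)).trans ?_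
  rw [EReal.coe_strictMono.monotone.map_max]
  exact max_le (hx k) (hy k)

lemma convex_setOf_legendreTransform_le_coe :
    Convex ℝ {x : E | ∃ c : ℝ, legendreTransform ψ x ≤ c} :=
  fun _ ⟨_, hx⟩ _ ⟨_, hy⟩ _ _ ha hb hab => ⟨_, legendreTransform_combo_le ha hb hab hx hy⟩

lemma convexOn_toReal_legendreTransform {s : Set E} (hs : Convex ℝ s)
    (hfin : ∀ x ∈ s, legendreTransform ψ x = (legendreTransform ψ x).toReal) :
    ConvexOn ℝ s fun x => (legendreTransform ψ x).toReal := by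
  refine ⟨hs, fun x hx y hy a b ha hb hab => ?_⟩
  have := legendreTransform_combo_le ha hb hab (hfin x hx).le (hfin y hy).le
  rwa [hfin _ (hs hx hy ha hb hab), EReal.coe_le_coe_iff] at this

theorem legendreTransform_eq_bot_xor_continuousOn [FiniteDimensional ℝ E] {s : Set E}
    (hs_open : IsOpen s) (hs_conv : Convex ℝ s) (hs_ne : s.Nonempty)
    (hbdd : ∀ x ∈ s, ∃ c : ℝ, legendreTransform ψ x ≤ c) :
    Xor (∀ x ∈ s, legendreTransform ψ x = ⊥)
      (∃ g : E → ℝ, ContinuousOn g s ∧ ∀ x ∈ s, legendreTransform ψ x = g x) := by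
  obtain ⟨x₀, hx₀⟩ := hs_ne
  by_cases hψ : ∀ k, ψ k = ⊤
  · refine .inl ⟨fun x _ => legendreTransform_eq_bot hψ x, fun ⟨g, _, hg⟩ => ?_⟩
    exact EReal.coe_ne_bot _ ((hg x₀ hx₀).symm.trans (legendreTransform_eq_bot hψ x₀))
  · obtain ⟨k₀, hk₀⟩ := not_forall.1 hψ
    have hfin : ∀ x ∈ s, legendreTransform ψ x = (legendreTransform ψ x).toReal := by
      intro x hx
      obtain ⟨c, hc⟩ := hbdd x hx
      exact (EReal.coe_toReal (hc.trans_lt (EReal.coe_lt_top c)).ne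
        (legendreTransform_ne_bot hk₀ x)).symm
    refine .inr ⟨⟨_, (convexOn_toReal_legendreTransform hs_conv hfin).continuousOn hs_open,
      hfin⟩, fun hbot => legendreTransform_ne_bot hk₀ x₀ (hbot x₀ hx₀)⟩

end LegendreTransform

section Orthant

variable {ι : Type*} [Fintype ι]

def openOrthant (x : EuclideanSpace ℝ ι) (s : ι → Bool) : Set (EuclideanSpace ℝ ι) :=
  {y | ∀ i, if s i then x i < y i else y i < x i}

lemma isOpen_openOrthant (x : EuclideanSpace ℝ ι) (s : ι → Bool) :
    IsOpen (openOrthant x s) := by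
  simp only [openOrthant, Set.ofPred_forall]
  refine isOpen_iInter_of_finite fun i => ?_
  cases s i
  · exact isOpen_lt (by fun_prop) continuous_const
  · exact isOpen_lt continuous_const (by fun_prop)

lemma ball_inter_openOrthant_nonempty (x : EuclideanSpace ℝ ι) (s : ι → Bool) {r : ℝ}
    (hr : 0 < r) : (Metric.ball x r ∩ openOrthant x s).Nonempty := by
  set v : EuclideanSpace ℝ ι := WithLp.toLp 2 fun i => if s i then 1 else -1
  set t : ℝ := r / (‖v‖ + 1)
  have ht : 0 < t := by positivity
  refine ⟨x + t • v, ?_, fun i => ?_⟩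
  · rw [Metric.mem_ball, dist_eq_norm, add_sub_cancel_left, norm_smul, Real.norm_of_nonneg ht.le]
    calc t * ‖v‖ < t * (‖v‖ + 1) := by gcongr; linarith
      _ = r := div_mul_cancel₀ r (by positivity)
  · cases hi : s i <;> simp [v, hi, ht]

lemma inner_sub_nonneg_of_mem_openOrthant {k x y : EuclideanSpace ℝ ι}
    (hy : y ∈ openOrthant x fun i => decide (0 ≤ k i)) : 0 ≤ ⟪k, y - x⟫ := by
  rw [PiLp.inner_apply]
  refine Finset.sum_nonneg fun i _ => ?_
  have hi := hy i
  simp only [RCLike.inner_apply, conj_trivial, PiLp.sub_apply]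
  by_cases hki : 0 ≤ k i
  · simp only [hki, decide_true, if_true] at hi
    nlinarith
  · simp only [hki, decide_false, Bool.false_eq_true, if_false] at hi
    nlinarith

end Orthant

lemma coe_add_log_measure_le_log_setLIntegral {α : Type*} [MeasurableSpace α] {μ : Measure α}
    {Ω A : Set α} (hA : MeasurableSet A) (hAΩ : A ⊆ Ω) {g : α → ℝ} {c : ℝ} (hc : ∀ y ∈ A, c ≤ g y) :
    (c : EReal) + ENNReal.log (μ A) ≤
      ENNReal.log (∫⁻ y in Ω, ENNReal.ofReal (Real.exp (g y)) ∂μ) := by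
  rw [← Real.log_exp c, ← ENNReal.log_ofReal_of_pos (Real.exp_pos c), ← ENNReal.log_mul_add]
  refine ENNReal.log_monotone ?_
  calc ENNReal.ofReal (Real.exp c) * μ A = ∫⁻ _ in A, ENNReal.ofReal (Real.exp c) ∂μ :=
        (setLIntegral_const A _).symm
    _ ≤ ∫⁻ y in A, ENNReal.ofReal (Real.exp (g y)) ∂μ :=
        setLIntegral_mono' hA fun y hy => ENNReal.ofReal_le_ofReal (Real.exp_le_exp.2 (hc y hy))
    _ ≤ ∫⁻ y in Ω, ENNReal.ofReal (Real.exp (g y)) ∂μ := lintegral_mono_set hAΩ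

lemma exists_forall_sub_le_log_setLIntegral_exp {ι : Type*} [Fintype ι]
    {μ : Measure (EuclideanSpace ℝ ι)} [IsFiniteMeasure μ] {Ω : Set (EuclideanSpace ℝ ι)}
    (hΩ : IsOpen Ω) (hμ : ∀ U, IsOpen U → U.Nonempty → U ⊆ Ω → 0 < μ U)
    {h : EuclideanSpace ℝ ι → ℝ} (hh : ContinuousOn h Ω) {x : EuclideanSpace ℝ ι} (hx : x ∈ Ω) :
    ∃ c : ℝ, ∀ k, ((⟪x, k⟫ - c : ℝ) : EReal) ≤
      ENNReal.log (∫⁻ y in Ω, ENNReal.ofReal (Real.exp (⟪k, y⟫ - h y)) ∂μ) := by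
  obtain ⟨R, hR, hRΩ⟩ := Metric.nhds_basis_closedBall.mem_iff.1 (hΩ.mem_nhds hx)
  obtain ⟨M, hM⟩ := (isCompact_closedBall x R).bddAbove_image (hh.mono hRΩ)
  set A : (ι → Bool) → Set (EuclideanSpace ℝ ι) := fun s => Metric.ball x R ∩ openOrthant x s
  have hAΩ : ∀ s, A s ⊆ Ω := fun _ =>
    Set.inter_subset_left.trans (Metric.ball_subset_closedBall.trans hRΩ)
  have hA_open : ∀ s, IsOpen (A s) := fun s => Metric.isOpen_ball.inter (isOpen_openOrthant x s)
  obtain ⟨s₀, hs₀⟩ := Finite.exists_min fun s => μ (A s)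
  have hA_pos : 0 < μ (A s₀) :=
    hμ _ (hA_open s₀) (ball_inter_openOrthant_nonempty x s₀ hR) (hAΩ s₀)
  refine ⟨M - Real.log (μ (A s₀)).toReal, fun k => ?_⟩
  set s : ι → Bool := fun i => decide (0 ≤ k i)
  have hbound : ∀ y ∈ A s, ⟪k, x⟫ - M ≤ ⟪k, y⟫ - h y := by
    intro y ⟨hy_ball, hy_orth⟩
    have hky := inner_sub_nonneg_of_mem_openOrthant hy_orth
    have hhy := hM (Set.mem_image_of_mem h (Metric.ball_subset_closedBall hy_ball))
    rw [inner_sub_right] at hky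
    linarith
  refine le_trans ?_
    (coe_add_log_measure_le_log_setLIntegral (hA_open s).measurableSet (hAΩ s) hbound)
  rw [real_inner_comm, sub_sub_eq_add_sub, add_sub_right_comm, EReal.coe_add,
    ← ENNReal.log_pos_real hA_pos.ne' (measure_ne_top μ _)]
  exact add_le_add le_rfl (ENNReal.log_monotone (hs₀ s))

lemma withDensity_ofReal_pos_of_isOpen {α : Type*} [TopologicalSpace α] [MeasurableSpace α]
    {μ : Measure α} [μ.IsOpenPosMeasure] {ρ : α → ℝ} (hρ : AEMeasurable ρ μ) {Ω : Set α}
    (hρ_pos : ∀ᵐ y ∂μ, y ∈ Ω → 0 < ρ y) {U : Set α} (hU : IsOpen U) (hU_ne : U.Nonempty)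
    (hUΩ : U ⊆ Ω) : 0 < μ.withDensity (fun y => ENNReal.ofReal (ρ y)) U := by
  refine pos_iff_ne_zero.2 fun h0 => (hU.measure_pos μ hU_ne).ne' ?_
  rw [withDensity_apply_eq_zero' hρ.ennreal_ofReal] at h0
  refine measure_mono_null_ae ?_ h0
  filter_upwards [hρ_pos] with y hy hyU
  exact ⟨(ENNReal.ofReal_pos.2 (hy (hUΩ hyU))).ne', hyU⟩

lemma psiTilt_eq_log_setLIntegral_withDensity {n : ℕ} {Ω : Set (EuclideanSpace ℝ (Fin n))}
    {ρ : EuclideanSpace ℝ (Fin n) → ℝ} (hρ : AEMeasurable ρ) (hΩ : MeasurableSet Ω)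
    (h : EuclideanSpace ℝ (Fin n) → ℝ) (k : EuclideanSpace ℝ (Fin n)) :
    psiTilt Ω ρ h k = ENNReal.log (∫⁻ y in Ω, ENNReal.ofReal (Real.exp (⟪k, y⟫ - h y))
      ∂volume.withDensity fun y => ENNReal.ofReal (ρ y)) := by
  rw [psiTilt, restrict_withDensity hΩ, lintegral_withDensity_eq_lintegral_mul_non_measurable₀ _
    hρ.ennreal_ofReal.restrict (ae_of_all _ fun _ => ENNReal.ofReal_lt_top)]
  simp only [Pi.mul_apply, ← ENNReal.ofReal_mul' (Real.exp_pos _).le]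

lemma phiTilt_eq_legendreTransform {n : ℕ} (Ω : Set (EuclideanSpace ℝ (Fin n)))
    (ρ h : EuclideanSpace ℝ (Fin n) → ℝ) : phiTilt Ω ρ h = legendreTransform (psiTilt Ω ρ h) :=
  rfl

theorem phiTilt_bot_or_continuous_general (n : ℕ)
    (Ω : Set (EuclideanSpace ℝ (Fin n))) (hΩo : IsOpen Ω) (hΩne : Ω.Nonempty)
    (h : EuclideanSpace ℝ (Fin n) → ℝ) (hh : ContinuousOn h Ω)
    (ρ : EuclideanSpace ℝ (Fin n) → ℝ)
    (hρint : Integrable ρ)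
    (hρsupp : ∀ᵐ y, (y ∈ Ω → 0 < ρ y) ∧ (y ∉ Ω → ρ y = 0)) :
    Xor'
      (∀ x ∈ convexHull ℝ Ω, phiTilt Ω ρ h x = ⊥)
      (∃ g : EuclideanSpace ℝ (Fin n) → ℝ,
        ContinuousOn g (convexHull ℝ Ω) ∧
        ∀ x ∈ convexHull ℝ Ω, phiTilt Ω ρ h x = ((g x : ℝ) : EReal)) := by
  have : IsFiniteMeasure (volume.withDensity fun y => ENNReal.ofReal (ρ y)) :=
    isFiniteMeasure_withDensity_ofReal hρint.hasFiniteIntegral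
  have hΩ_bdd : ∀ x ∈ Ω, ∃ c : ℝ, legendreTransform (psiTilt Ω ρ h) x ≤ c := by
    intro x hx
    obtain ⟨c, hc⟩ := exists_forall_sub_le_log_setLIntegral_exp hΩo
      (fun U hU hU_ne hUΩ => withDensity_ofReal_pos_of_isOpen hρint.aemeasurable
        (hρsupp.mono fun _ hy => hy.1) hU hU_ne hUΩ) hh hx
    refine ⟨c, legendreTransform_le_coe_iff.2 fun k => ?_⟩
    rw [psiTilt_eq_log_setLIntegral_withDensity hρint.aemeasurable hΩo.measurableSet]
    exact hc k
  rw [phiTilt_eq_legendreTransform]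
  exact legendreTransform_eq_bot_xor_continuousOn hΩo.convexHull (convex_convexHull ℝ Ω)
    (hΩne.mono (subset_convexHull ℝ Ω))
    fun x hx => convexHull_min hΩ_bdd convex_setOf_legendreTransform_le_coe hx

/-- Proposition 2, part 1. On the convex hull of `Ω`, the Legendre
transform `φ_h` is either identically `−∞` or real-valued and continuous. -/
theorem phiTilt_bot_or_continuous (n : ℕ)
    (Ω : Set (EuclideanSpace ℝ (Fin n))) (hΩo : IsOpen Ω) (hΩne : Ω.Nonempty)
    (h : EuclideanSpace ℝ (Fin n) → ℝ) (hh : ContinuousOn h Ω)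
    (ρ : EuclideanSpace ℝ (Fin n) → ℝ) (hρ0 : ∀ y, 0 ≤ ρ y)
    (hρint : Integrable ρ) (hρ1 : (∫ y, ρ y) = 1)
    (hρsupp : ∀ᵐ y, (y ∈ Ω → 0 < ρ y) ∧ (y ∉ Ω → ρ y = 0)) :
    Xor'
      (∀ x ∈ convexHull ℝ Ω, phiTilt Ω ρ h x = ⊥)
      (∃ g : EuclideanSpace ℝ (Fin n) → ℝ,
        ContinuousOn g (convexHull ℝ Ω) ∧
        ∀ x ∈ convexHull ℝ Ω, phiTilt Ω ρ h x = ((g x : ℝ) : EReal)) :=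
  phiTilt_bot_or_continuous_general n Ω hΩo hΩne h hh ρ hρint hρsupp
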